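/- arXiv:2212.03488 — 3 statements merged into one kernel-verified Lean document; each statement's English description precedes it below -/
import Mathlib

section
/- Let R ⊆ A be commutative rings with nilradical η of R nilpotent. Suppose A[T₁,…,Tₘ] is a polynomial ring over R in m+n variables (i.e. A^[m] = R^[m+n] as R-algebras) and A/ηA is a polynomial ring in n variables over R/η. Then A is a polynomial ring in n variables over R. -/
open MvPolynomial

/-- Let `R ⊆ A` be commutative rings with the nilradical `η` of `R` nilpotent.
If `A[T₁,…,Tₘ] ≅ R[X₁,…,X_{m+n}]` as `R`-algebras and `A/ηA` is a polynomial ring in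
`n` variables over `R/η`, then `A` is a polynomial ring in `n` variables over `R`. -/
theorem stably_polynomial_is_polynomial (R A : Type*) [CommRing R] [CommRing A]
    [Algebra R A] (hinj : Function.Injective (algebraMap R A))
    (m n : ℕ)
    (hnilp : IsNilpotent (nilradical R))
    (hstably : Nonempty (MvPolynomial (Fin m) A ≃ₐ[R] MvPolynomial (Fin (m + n)) R))
    (hmod : Nonempty ((A ⧸ Ideal.map (algebraMap R A) (nilradical R)) ≃ₐ[R]
      MvPolynomial (Fin n) (R ⧸ nilradical R))) :
    Nonempty (A ≃ₐ[R] MvPolynomial (Fin n) R) := by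
  obtain ⟨e⟩ := hstably
  obtain ⟨ψ⟩ := hmod
  obtain ⟨N, hN⟩ := hnilp
  set η := nilradical R with hη
  set I := Ideal.map (algebraMap R A) η with hI
  -- A is a projective R-module (retract of a free module)
  have hproj : Module.Projective R A := by
    refine Module.Projective.of_split
      (e.toLinearMap ∘ₗ (Algebra.linearMap A (MvPolynomial (Fin m) A)).restrictScalars R)
      ((((MvPolynomial.aeval (fun _ => (0:A)) : MvPolynomial (Fin m) A →ₐ[A] A)).toLinearMap.restrictScalars R) ∘ₗ e.symm.toLinearMap) ?_
    ext a
    simp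
  -- choose lifts of ψ.symm (X i)
  have hlift : ∀ i : Fin n, ∃ a : A, Ideal.Quotient.mk I a = ψ.symm (X i) :=
    fun i => Ideal.Quotient.mk_surjective _
  choose a ha using hlift
  set φ : MvPolynomial (Fin n) R →ₐ[R] A := MvPolynomial.aeval a with hφ
  set μ : MvPolynomial (Fin n) R →ₐ[R] MvPolynomial (Fin n) (R ⧸ η) :=
    MvPolynomial.mapAlgHom (Ideal.Quotient.mkₐ R η) with hμ
  have key : (Ideal.Quotient.mkₐ R I).comp φ = (ψ.symm : _ →ₐ[R] _).comp μ := by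
    apply MvPolynomial.algHom_ext
    intro i
    simp [hφ, hμ, ha i]
  have keyfun : ∀ p, Ideal.Quotient.mk I (φ p) = ψ.symm (μ p) := fun p =>
    AlgHom.congr_fun key p
  -- μ is surjective
  have hμsurj : Function.Surjective μ := by
    have : Function.Surjective (MvPolynomial.map (Ideal.Quotient.mk η) :
        MvPolynomial (Fin n) R → MvPolynomial (Fin n) (R ⧸ η)) :=
      MvPolynomial.map_surjective _ Ideal.Quotient.mk_surjective
    exact this
  -- base fact for surjectivity: every a ∈ A is in range φ ⊔ η • ⊤
  set Sl : Submodule R A := Subalgebra.toSubmodule φ.range with hSl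
  have hbase : (⊤ : Submodule R A) ≤ Sl ⊔ η • (⊤ : Submodule R A) := by
    intro x _
    obtain ⟨p, hp⟩ := hμsurj (ψ (Ideal.Quotient.mk I x))
    have hx : Ideal.Quotient.mk I (x - φ p) = 0 := by
      rw [map_sub, keyfun, hp, AlgEquiv.symm_apply_apply, sub_self]
    have hmem : x - φ p ∈ η • (⊤ : Submodule R A) := by
      rw [Ideal.smul_top_eq_map]
      exact Ideal.Quotient.eq_zero_iff_mem.mp hx
    have : x = φ p + (x - φ p) := by ring
    rw [this]
    exact Submodule.add_mem_sup ⟨p, rfl⟩ hmem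
  -- surjectivity by induction
  have hsurjstep : ∀ j : ℕ, (⊤ : Submodule R A) ≤ Sl ⊔ η ^ j • (⊤ : Submodule R A) := by
    intro j
    induction j with
    | zero =>
      rw [pow_zero, Ideal.one_eq_top, Submodule.top_smul]
      exact le_sup_right
    | succ j ih =>
      refine le_trans ih (sup_le le_sup_left ?_)
      have : η ^ j • (⊤ : Submodule R A) ≤ Sl ⊔ η ^ (j+1) • (⊤ : Submodule R A) := by
        refine Submodule.smul_le.mpr ?_
        intro c hc x hx
        obtain hxm := hbase (Submodule.mem_top (x := x))
        -- x ∈ Sl ⊔ η • ⊤ ; decompose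
        obtain ⟨s, hs, t, ht, hst⟩ := Submodule.mem_sup.mp hxm
        have : c • x = c • s + c • t := by rw [← smul_add, hst]
        rw [this]
        refine Submodule.add_mem _ ?_ ?_
        · exact Submodule.mem_sup_left (Sl.smul_mem c hs)
        · refine Submodule.mem_sup_right ?_
          have : c • t ∈ η ^ j • (η • (⊤ : Submodule R A)) := Submodule.smul_mem_smul hc ht
          rwa [← Submodule.smul_assoc, smul_eq_mul, ← pow_succ] at this
      exact this
  have hsurj : Function.Surjective φ := by
    intro x
    have : x ∈ Sl ⊔ η ^ N • (⊤ : Submodule R A) := hsurjstep N Submodule.mem_top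
    rw [hN, Ideal.zero_eq_bot, Submodule.bot_smul, sup_bot_eq] at this
    exact this
  -- kernel: K ≤ η • ⊤
  set K : Submodule R (MvPolynomial (Fin n) R) :=
    Submodule.restrictScalars R (RingHom.ker (φ : MvPolynomial (Fin n) R →+* A)) with hK
  have hKle : K ≤ η • (⊤ : Submodule R (MvPolynomial (Fin n) R)) := by
    intro p hp
    have h0 : φ p = 0 := hp
    have : ψ.symm (μ p) = 0 := by rw [← keyfun, h0, map_zero]
    have hμp : μ p = 0 := by
      have := congrArg ψ this
      rwa [AlgEquiv.apply_symm_apply, map_zero] at this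
    have : p ∈ RingHom.ker (MvPolynomial.map (Ideal.Quotient.mk η)) := hμp
    rw [MvPolynomial.ker_map, Ideal.mk_ker] at this
    rw [Ideal.smul_top_eq_map]
    exact this
  -- section of φ
  obtain ⟨s, hs⟩ := Module.projective_lifting_property φ.toLinearMap LinearMap.id hsurj
  set π : MvPolynomial (Fin n) R →ₗ[R] MvPolynomial (Fin n) R :=
    LinearMap.id - s ∘ₗ φ.toLinearMap with hπ
  have hπrange : LinearMap.range π ≤ K := by
    rintro _ ⟨p, rfl⟩
    show φ _ = 0
    have : φ (p - s (φ p)) = φ p - φ (s (φ p)) := map_sub φ _ _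
    have hss : φ (s (φ p)) = φ p := LinearMap.congr_fun hs (φ p)
    simp [hπ, this, hss]
  have hπK : ∀ p ∈ K, π p = p := by
    intro p hp
    have h0 : φ p = 0 := hp
    simp [hπ, h0]
  have hKstep : ∀ j : ℕ, K ≤ η ^ j • (⊤ : Submodule R (MvPolynomial (Fin n) R)) := by
    intro j
    induction j with
    | zero =>
      rw [pow_zero, Ideal.one_eq_top, Submodule.top_smul]
      exact le_top
    | succ j ih =>
      intro p hp
      have h1 : p ∈ Submodule.map π (η ^ j • (⊤ : Submodule R (MvPolynomial (Fin n) R))) := by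
        rw [← hπK p hp]
        exact Submodule.mem_map_of_mem (ih hp)
      rw [Submodule.map_smul''] at h1
      have h2 : Submodule.map π ⊤ ≤ η • (⊤ : Submodule R (MvPolynomial (Fin n) R)) := by
        refine le_trans ?_ hKle
        rw [Submodule.map_top]
        exact hπrange
      have h3 : η ^ j • Submodule.map π ⊤ ≤ η ^ j • (η • (⊤ : Submodule R (MvPolynomial (Fin n) R))) :=
        Submodule.smul_mono le_rfl h2
      have := h3 h1
      rwa [← Submodule.smul_assoc, smul_eq_mul, ← pow_succ] at this
  have hinjφ : Function.Injective φ := by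
    rw [injective_iff_map_eq_zero]
    intro p hp
    have : p ∈ η ^ N • (⊤ : Submodule R (MvPolynomial (Fin n) R)) := hKstep N hp
    rwa [hN, Ideal.zero_eq_bot, Submodule.bot_smul, Submodule.mem_bot] at this
  exact ⟨(AlgEquiv.ofBijective φ ⟨hinjφ, hsurj⟩).symm⟩
end

section
/- Let R be a commutative ring containing ℚ, A an R-algebra, and D a locally nilpotent R-derivation of A admitting a slice s (i.e. D(s) = 1). Then A = Ker(D)[s] and s is transcendental over Ker(D), i.e. A is a polynomial ring in one variable over Ker(D). -/
set_option synthInstance.maxHeartbeats 1000000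
set_option maxHeartbeats 1000000


/-- Slice theorem: if `R ⊇ ℚ`, `A` an `R`-algebra and `D` a locally nilpotent
`R`-derivation of `A` with a slice `s` (`D s = 1`), then `A = (Ker D)[s]` with `s`
transcendental over `Ker D`, i.e. `A` is a polynomial ring in one variable over `Ker D`. -/
theorem slice_theorem (R A : Type*) [CommRing R] [Algebra ℚ R] [CommRing A] [Algebra R A]
    (D : Derivation R A A)
    (hlnd : ∀ a : A, ∃ k : ℕ, (fun b => D b)^[k] a = 0)
    (s : A) (hs : D s = 1) :
    ∃ K : Subalgebra R A,
      (∀ a, a ∈ K ↔ D a = 0) ∧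
      Algebra.adjoin K {s} = (⊤ : Subalgebra K A) ∧
      Transcendental K s := by
  classical
  let K : Subalgebra R A :=
  { carrier := {a | D a = 0}
    mul_mem' := by
      intro a b ha hb
      simp only [Set.mem_setOf_eq] at *
      rw [D.leibniz]
      simp [ha, hb]
    one_mem' := by simp [Set.mem_setOf_eq]
    add_mem' := by
      intro a b ha hb
      simp only [Set.mem_setOf_eq] at *
      simp [ha, hb]
    zero_mem' := by simp [Set.mem_setOf_eq]
    algebraMap_mem' := fun r => D.map_algebraMap r }
  have hKmem : ∀ a : A, a ∈ K ↔ D a = 0 := fun a => Iff.rfl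
  -- the canonical map ℚ → A, landing in K
  let f : ℚ →+* A := (algebraMap R A).comp (algebraMap ℚ R)
  have hfK : ∀ q : ℚ, D (f q) = 0 := fun q => D.map_algebraMap _
  have hcoeK : ∀ k : ↥K, D (k : A) = 0 := fun k => k.2
  have hDmul : ∀ (k : ↥K) (a : A), D ((k : A) * a) = (k : A) * D a := by
    intro k a
    rw [D.leibniz]
    simp [hcoeK k]
  -- derivative of powers of s
  have hpow : ∀ n : ℕ, D (s ^ (n + 1)) = (n + 1 : ℕ) * s ^ n := by
    intro n
    induction n with
    | zero => simp [hs]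
    | succ n ih =>
      rw [pow_succ, D.leibniz, ih, hs]
      push_cast
      ring_nf
  have hfnat : ∀ n : ℕ, f (n : ℚ) = (n : A) := fun n => map_natCast f n
  -- the span of the powers of s over K
  let S : Submodule ↥K A := Submodule.span ↥K (Set.range fun n : ℕ => s ^ n)
  have hsmul : ∀ (k : ↥K) (a : A), k • a = (k : A) * a := fun k a => rfl
  -- antiderivative lemma on S
  have hanti : ∀ a ∈ S, ∃ c ∈ S, D c = a := by
    intro a ha
    induction ha using Submodule.span_induction with
    | mem x hx =>
      obtain ⟨n, rfl⟩ := hx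
      refine ⟨f ((n + 1 : ℚ)⁻¹) * s ^ (n + 1), ?_, ?_⟩
      · have : f ((n + 1 : ℚ)⁻¹) * s ^ (n + 1)
            = (⟨f ((n + 1 : ℚ)⁻¹), hfK _⟩ : ↥K) • s ^ (n + 1) := rfl
        rw [this]
        exact Submodule.smul_mem _ _ (Submodule.subset_span ⟨n + 1, rfl⟩)
      · rw [hDmul ⟨f ((n + 1 : ℚ)⁻¹), hfK _⟩ (s ^ (n + 1)), hpow n, ← mul_assoc,
          ← hfnat (n + 1)]
        rw [← map_mul]
        have : ((n + 1 : ℚ)⁻¹ * ((n + 1 : ℕ) : ℚ)) = 1 := by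
          push_cast
          field_simp
        rw [this, map_one, one_mul]
    | zero => exact ⟨0, Submodule.zero_mem _, map_zero D⟩
    | add x y _ _ hx hy =>
      obtain ⟨c, hc, hdc⟩ := hx
      obtain ⟨d, hd, hdd⟩ := hy
      exact ⟨c + d, Submodule.add_mem _ hc hd, by rw [map_add, hdc, hdd]⟩
    | smul k x _ hx =>
      obtain ⟨c, hc, hdc⟩ := hx
      refine ⟨k • c, Submodule.smul_mem _ _ hc, ?_⟩
      rw [hsmul, hDmul, hdc, ← hsmul]
  -- every locally nilpotent element is in S
  have hmain : ∀ (k : ℕ) (a : A), (fun b => D b)^[k] a = 0 → a ∈ S := by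
    intro k
    induction k with
    | zero => intro a ha; simp at ha; simp [ha, Submodule.zero_mem]
    | succ k ih =>
      intro a ha
      have hDa : D a ∈ S := by
        apply ih
        rw [← Function.iterate_succ_apply]
        exact ha
      obtain ⟨c, hc, hdc⟩ := hanti _ hDa
      have hac : D (a - c) = 0 := by rw [map_sub, hdc, sub_self]
      have : a - c ∈ S := by
        have h1 : a - c = (⟨a - c, hac⟩ : ↥K) • s ^ 0 := by
          rw [hsmul]; simp
        rw [h1]
        exact Submodule.smul_mem _ _ (Submodule.subset_span ⟨0, rfl⟩)
      have := Submodule.add_mem S this hc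
      simpa using this
  have hSle : ∀ a ∈ S, a ∈ Algebra.adjoin ↥K {s} := by
    intro a ha
    have : S ≤ Subalgebra.toSubmodule (Algebra.adjoin ↥K {s}) := by
      rw [Submodule.span_le]
      rintro _ ⟨n, rfl⟩
      exact pow_mem (Algebra.self_mem_adjoin_singleton _ _) n
    exact this ha
  refine ⟨K, hKmem, ?_, ?_⟩
  · rw [eq_top_iff]
    intro a _
    obtain ⟨k, hk⟩ := hlnd a
    exact hSle a (hmain k a hk)
  · -- transcendence
    rw [transcendental_iff]
    -- D commutes with aeval at s
    have hDaeval : ∀ p : Polynomial ↥K,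
        D (Polynomial.aeval s p) = Polynomial.aeval s (Polynomial.derivative p) := by
      intro p
      induction p using Polynomial.induction_on' with
      | add p q hp hq =>
        rw [Polynomial.derivative_add, map_add, map_add, map_add, hp, hq]
      | monomial n c =>
        rw [Polynomial.aeval_monomial, Polynomial.derivative_monomial]
        cases n with
        | zero =>
          simp only [pow_zero, mul_one]
          have : (algebraMap ↥K A) c = (c : A) := rfl
          rw [this, hcoeK c]
          simp
        | succ n =>
          have h1 : (algebraMap ↥K A) c = (c : A) := rfl
          rw [h1, hDmul, hpow n, Polynomial.aeval_monomial]
          have h2 : (algebraMap ↥K A) (c * (↑(n + 1) : ↥K)) = (c : A) * ((n + 1 : ℕ) : A) := by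
            push_cast
            rfl
          rw [h2]
          simp only [Nat.add_sub_cancel]
          ring
    -- inverses of positive naturals in K
    have hinv : ∀ (n : ℕ) (c : ↥K), c * ((n + 1 : ℕ) : ↥K) = 0 → c = 0 := by
      intro n c hc
      have e : ↥K := ⟨f ((n + 1 : ℚ)⁻¹), hfK _⟩
      have hA : f ((n + 1 : ℚ)⁻¹) * (((n + 1 : ℕ) : ↥K) : A) = 1 := by
        have h3 : (((n + 1 : ℕ) : ↥K) : A) = ((n + 1 : ℕ) : A) := by push_cast; ring
        rw [h3, ← hfnat (n + 1), ← map_mul]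
        have : ((n + 1 : ℚ)⁻¹ * ((n + 1 : ℕ) : ℚ)) = 1 := by
          push_cast
          field_simp
        rw [this, map_one]
      have key : (⟨f ((n + 1 : ℚ)⁻¹), hfK _⟩ : ↥K) * ((n + 1 : ℕ) : ↥K) = 1 := by
        apply Subtype.ext
        exact hA
      calc c = c * ((⟨f ((n + 1 : ℚ)⁻¹), hfK _⟩ : ↥K) * ((n + 1 : ℕ) : ↥K)) := by
              rw [key, mul_one]
        _ = (⟨f ((n + 1 : ℚ)⁻¹), hfK _⟩ : ↥K) * (c * ((n + 1 : ℕ) : ↥K)) := by ring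
        _ = 0 := by rw [hc, mul_zero]
    -- main induction on degree
    have hdeg : ∀ (n : ℕ) (p : Polynomial ↥K), p.natDegree ≤ n →
        Polynomial.aeval s p = 0 → p = 0 := by
      intro n
      induction n with
      | zero =>
        intro p hp hap
        rw [Polynomial.eq_C_of_natDegree_le_zero hp] at hap ⊢
        rw [Polynomial.aeval_C] at hap
        have : p.coeff 0 = 0 := by
          apply Subtype.ext
          exact hap
        rw [this, map_zero]
      | succ n ih =>
        intro p hp hap
        have hder : Polynomial.aeval s (Polynomial.derivative p) = 0 := by
          rw [← hDaeval, hap, map_zero]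
        have hd0 : Polynomial.derivative p = 0 := by
          apply ih _ _ hder
          calc (Polynomial.derivative p).natDegree ≤ p.natDegree - 1 :=
              Polynomial.natDegree_derivative_le p
            _ ≤ n := by omega
        -- so all higher coefficients vanish
        have hcoeff : ∀ m : ℕ, p.coeff (m + 1) = 0 := by
          intro m
          have := Polynomial.coeff_derivative p m
          rw [hd0, Polynomial.coeff_zero] at this
          have h2 : p.coeff (m + 1) * ((m + 1 : ℕ) : ↥K) = 0 := by
            rw [← this.symm]
            push_cast
            ring
          exact hinv m _ h2
        have hpc : p = Polynomial.C (p.coeff 0) := by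
          ext m
          cases m with
          | zero => simp
          | succ m => simp [hcoeff m]
        rw [hpc] at hap ⊢
        rw [Polynomial.aeval_C] at hap
        have : p.coeff 0 = 0 := Subtype.ext hap
        rw [this, map_zero]
    intro p hp
    exact hdeg p.natDegree p le_rfl hp
end

section
/- Let R be a commutative ring, B = R[X₁,…,Xₙ] a polynomial ring, and F ∈ B. Let L be a field that is an R-algebra, and suppose in B ⊗_R L = L[X₁,…,Xₙ] we can write the image F̄ of F as F̄ = a₀ + a₁U + a₂U² + ⋯ + a_mU^m with aᵢ ∈ L and U ∈ L[X₁,…,Xₙ]. If there exist b₁,…,bₙ ∈ L[X₁,…,Xₙ] with b₁·∂F̄/∂X₁ + ⋯ + bₙ·∂F̄/∂Xₙ = 1 and U is transcendental over L, then aᵢ = 0 for all i ≥ 2, i.e. F̄ is linear in U. -/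
open MvPolynomial Polynomial

lemma mv_unit_eq_C {L : Type*} [Field L] : ∀ {n : ℕ} (f : MvPolynomial (Fin n) L),
    IsUnit f → ∃ c : L, f = MvPolynomial.C c := by
  intro n
  induction n with
  | zero => intro f _; exact ⟨f.coeff 0, f.eq_C_of_isEmpty⟩
  | succ n ih =>
    intro f hf
    have h1 : IsUnit (MvPolynomial.finSuccEquiv L n f) := hf.map _
    obtain ⟨r, hr, hrf⟩ := Polynomial.isUnit_iff.mp h1
    obtain ⟨c, hc⟩ := ih r hr
    refine ⟨c, ?_⟩
    have := congrArg (MvPolynomial.finSuccEquiv L n).symm hrf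
    rw [AlgEquiv.symm_apply_apply] at this
    rw [← this, hc]
    have h3 := RingHom.congr_fun (MvPolynomial.finSuccEquiv_comp_C_eq_C (R := L) n) c
    simpa using h3

/-- If `F̄ = a₀ + a₁U + ⋯ + a_mU^m` in `L[X₁,…,Xₙ]` with `aᵢ ∈ L`, `U` transcendental over
`L`, and the partial derivatives of `F̄` generate the unit ideal (indeed
`∑ bᵢ ∂F̄/∂Xᵢ = 1`), then `aᵢ = 0` for all `i ≥ 2`, i.e. `F̄` is linear in `U`. -/
theorem linear_in_U_of_unit_partials (L : Type*) [Field L] [CharZero L] (n m : ℕ)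
    (a : ℕ → L) (U F : MvPolynomial (Fin n) L)
    (hU : Transcendental L U)
    (hF : F = ∑ i ∈ Finset.range (m + 1), MvPolynomial.C (a i) * U ^ i)
    (b : Fin n → MvPolynomial (Fin n) L)
    (hunit : ∑ j : Fin n, b j * MvPolynomial.pderiv j F = 1) :
    ∀ i, 2 ≤ i → i ≤ m → a i = 0 := by
  set p : Polynomial L := ∑ i ∈ Finset.range (m + 1), Polynomial.C (a i) * Polynomial.X ^ i
    with hp
  have hFp : F = Polynomial.aeval U p := by
    rw [hF, hp, map_sum]
    refine Finset.sum_congr rfl fun i _ => ?_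
    simp [MvPolynomial.algebraMap_eq]
  -- chain rule
  have hderiv : ∀ j : Fin n, MvPolynomial.pderiv j F
      = Polynomial.aeval U (Polynomial.derivative p) * MvPolynomial.pderiv j U := by
    intro j
    rw [hFp]
    have := (MvPolynomial.pderiv (R := L) j).comp_aeval_eq (a := U) p
    rw [this, smul_eq_mul]
  have key : Polynomial.aeval U (Polynomial.derivative p)
      * ∑ j : Fin n, b j * MvPolynomial.pderiv j U = 1 := by
    rw [Finset.mul_sum, ← hunit]
    refine Finset.sum_congr rfl fun j _ => ?_
    rw [hderiv j]; ring
  have hu : IsUnit (Polynomial.aeval U (Polynomial.derivative p)) := IsUnit.of_mul_eq_one _ key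
  obtain ⟨c, hc⟩ := mv_unit_eq_C _ hu
  have hinj : Function.Injective (Polynomial.aeval (R := L) U) :=
    transcendental_iff_injective.mp hU
  have hpc : Polynomial.derivative p = Polynomial.C c := by
    apply hinj
    rw [hc]
    simp [MvPolynomial.algebraMap_eq]
  intro i h2 hm
  have hcoeff : (Polynomial.derivative p).coeff (i - 1) = 0 := by
    rw [hpc, Polynomial.coeff_C, if_neg (by omega)]
  rw [Polynomial.coeff_derivative] at hcoeff
  have hpcoeff : p.coeff (i - 1 + 1) = a i := by
    have hi : i - 1 + 1 = i := by omega
    rw [hi, hp, Polynomial.finset_sum_coeff]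
    simp only [Polynomial.coeff_C_mul, Polynomial.coeff_X_pow]
    rw [Finset.sum_eq_single i] <;> simp_all <;> omega
  rw [hpcoeff] at hcoeff
  exact (mul_eq_zero.mp hcoeff).resolve_right (Nat.cast_add_one_ne_zero (i - 1))
end
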